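/- arXiv:1907.09234 — 2 statements merged into one kernel-verified Lean document; each statement's English description precedes it below -/
import Mathlib

section
/- Let H : P → 𝒴 be a G-equivariant surjection that is injective on each orbit (fiber), and let σ_Y be a cross section of π_ϕ : 𝒴 → 𝒴/G. Define σ_{PY}([p]) to be the unique point in 𝒪(p) ∩ H^{-1}(σ_Y([H(p)])). Then σ_{PY} is a cross section of π_φ : P → P/G, it satisfies H(σ_{PY}([p])) = σ_Y([H(p)]), and the fibre coordinates agree: γ_{σ_{PY}}(p) = γ_{σ_Y}(H(p)) for all p ∈ P. -/
/- STATEMENT 10: Let H : P → 𝒴 be a G-equivariant surjection that is injective on each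
orbit, and σ_Y a cross section of π_ϕ : 𝒴 → 𝒴/G. Then the associated map σ_{PY},
assigning to [p] the unique point of 𝒪(p) ∩ H⁻¹(σ_Y([H(p)])), is a cross section of
π_φ : P → P/G, it satisfies H(σ_{PY}([p])) = σ_Y([H(p)]), and the fibre coordinates
agree: γ_{σ_{PY}}(p) = γ_{σ_Y}(H(p)) for all p ∈ P. -/
theorem associated_cross_section {G P Y : Type*} [Group G] [MulAction G P] [MulAction G Y]
    (H : P → Y)
    (hequiv : ∀ (g : G) (p : P), H (g • p) = g • H p)
    (hsurj : Function.Surjective H)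
    (hinj : ∀ p : P, Set.InjOn H (MulAction.orbit G p))
    (σY : Quotient (MulAction.orbitRel G Y) → Y)
    (hσY : ∀ q, Quotient.mk (MulAction.orbitRel G Y) (σY q) = q) :
    ∃ σPY : Quotient (MulAction.orbitRel G P) → P,
      (∀ q, Quotient.mk (MulAction.orbitRel G P) (σPY q) = q) ∧
      (∀ p : P, σPY (Quotient.mk (MulAction.orbitRel G P) p) ∈ MulAction.orbit G p ∧
        H (σPY (Quotient.mk (MulAction.orbitRel G P) p))
          = σY (Quotient.mk (MulAction.orbitRel G Y) (H p))) ∧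
      (∀ p : P, {g : G | p = g • σPY (Quotient.mk (MulAction.orbitRel G P) p)}
          = {g : G | H p = g • σY (Quotient.mk (MulAction.orbitRel G Y) (H p))}) := by
  classical
  -- For each class q, σY of [H q.out] lies in the orbit of H q.out.
  have key : ∀ q : Quotient (MulAction.orbitRel G P),
      ∃ g : G, g • q.out = g • q.out ∧
        H (g • q.out) = σY (Quotient.mk (MulAction.orbitRel G Y) (H q.out)) := by
    intro q
    have h1 : Quotient.mk (MulAction.orbitRel G Y)
        (σY (Quotient.mk (MulAction.orbitRel G Y) (H q.out)))
        = Quotient.mk (MulAction.orbitRel G Y) (H q.out) := hσY _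
    have h2 : σY (Quotient.mk (MulAction.orbitRel G Y) (H q.out))
        ∈ MulAction.orbit G (H q.out) := Quotient.exact h1
    obtain ⟨g, hg⟩ := h2
    exact ⟨g, rfl, by rw [hequiv]; exact hg⟩
  choose gq _ hgq using key
  set σPY : Quotient (MulAction.orbitRel G P) → P := fun q => gq q • q.out with hσPY
  -- σPY q is in the orbit of q.out
  have horb : ∀ q, σPY q ∈ MulAction.orbit G q.out := fun q => ⟨gq q, rfl⟩
  have hsec : ∀ q, Quotient.mk (MulAction.orbitRel G P) (σPY q) = q := by
    intro q
    have : Quotient.mk (MulAction.orbitRel G P) (σPY q)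
        = Quotient.mk (MulAction.orbitRel G P) q.out := Quotient.sound (horb q)
    rw [this, Quotient.out_eq]
  have horbP : ∀ p : P, σPY (Quotient.mk (MulAction.orbitRel G P) p)
      ∈ MulAction.orbit G p := by
    intro p
    have := hsec (Quotient.mk (MulAction.orbitRel G P) p)
    exact Quotient.exact this
  have hHclass : ∀ p : P,
      Quotient.mk (MulAction.orbitRel G Y)
        (H (Quotient.mk (MulAction.orbitRel G P) p).out)
      = Quotient.mk (MulAction.orbitRel G Y) (H p) := by
    intro p
    apply Quotient.sound
    have h0 : (Quotient.mk (MulAction.orbitRel G P) p).out ∈ MulAction.orbit G p :=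
      Quotient.exact (Quotient.out_eq (Quotient.mk (MulAction.orbitRel G P) p))
    obtain ⟨g, hg⟩ := h0
    exact ⟨g, by rw [← hg, hequiv]⟩
  have hH : ∀ p : P, H (σPY (Quotient.mk (MulAction.orbitRel G P) p))
      = σY (Quotient.mk (MulAction.orbitRel G Y) (H p)) := by
    intro p
    rw [← hHclass p]
    exact hgq _
  refine ⟨σPY, hsec, fun p => ⟨horbP p, hH p⟩, fun p => ?_⟩
  ext g
  simp only [Set.mem_setOf_eq]
  constructor
  · intro h
    have h' := congrArg H h
    rw [hequiv, hH] at h'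
    exact h'
  · intro h
    have h1 : H p = H (g • σPY (Quotient.mk (MulAction.orbitRel G P) p)) := by
      rw [hequiv, hH]; exact h
    have h2 : g • σPY (Quotient.mk (MulAction.orbitRel G P) p) ∈ MulAction.orbit G p := by
      obtain ⟨g', hg'⟩ := horbP p
      refine ⟨g * g', ?_⟩
      show (g * g') • p = _
      rw [mul_smul]
      exact congrArg (g • ·) hg'
    exact hinj p (MulAction.mem_orbit_self p) h2 h1
end

section
/- Consider attitude kinematics on SO(3) with measured directions y_k = Rᵀ e_k for k = 2,3, estimate R̃, and error E = R R̃ᵀ. For the cost V^e(E) = Σ_{k=2}^{3} ‖e_k − E e_k‖², the left-trivialized differential of V^e at E, paired with ξ ∈ ℝ³ (identified with so(3) via the hat map), equals Σ_{k=2}^{3} ⟨ −2 ê_k R̃ y_k , ξ ⟩; in particular this gradient depends only on R̃ and the measurements y₂, y₃ and not directly on R. -/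
/-! Differentiating at `s = 0` gives `-2 ∑ₖ ⟨eₖ - E eₖ, E ξ̂ eₖ⟩`. As `E` is orthogonal,
`⟨E eₖ, E ξ̂ eₖ⟩ = ⟨eₖ, ξ × eₖ⟩ = 0`, and the cyclic symmetry of the triple product turns the
remaining term `⟨Eᵀ eₖ, ξ × eₖ⟩` into `⟨eₖ × Eᵀ eₖ, ξ⟩`. Finally `Eᵀ eₖ = R̃ Rᵀ eₖ = R̃ yₖ`. -/

open Matrix

/-- The hat map ℝ³ → so(3), the canonical isomorphism with `hat x *ᵥ v = x × v`. -/
def hat (x : Fin 3 → ℝ) : Matrix (Fin 3) (Fin 3) ℝ :=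
  !![0, -x 2, x 1; x 2, 0, -x 0; -x 1, x 0, 0]

theorem hat_mulVec (x v : Fin 3 → ℝ) : hat x *ᵥ v = x ⨯₃ v := by
  ext i
  fin_cases i <;> simp [hat, mulVec, dotProduct, Fin.sum_univ_three, cross_apply] <;> ring

theorem Matrix.mulVec_dotProduct_mulVec_of_transpose_mul_self {n α : Type*} [Fintype n]
    [DecidableEq n] [CommSemiring α] {E : Matrix n n α} (hE : Eᵀ * E = 1) (v w : n → α) :
    E *ᵥ v ⬝ᵥ E *ᵥ w = v ⬝ᵥ w := by
  rw [dotProduct_mulVec, ← mulVec_transpose, mulVec_mulVec, hE, one_mulVec]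

theorem sub_mulVec_dotProduct_mul_hat_mulVec {E : Matrix (Fin 3) (Fin 3) ℝ} (hE : Eᵀ * E = 1)
    (e ξ : Fin 3 → ℝ) : (e - E *ᵥ e) ⬝ᵥ (E * hat ξ) *ᵥ e = hat e *ᵥ (Eᵀ *ᵥ e) ⬝ᵥ ξ := by
  rw [← mulVec_mulVec, sub_dotProduct, mulVec_dotProduct_mulVec_of_transpose_mul_self hE,
    hat_mulVec, hat_mulVec, dot_cross_self, sub_zero, dotProduct_mulVec, ← mulVec_transpose,
    triple_product_permutation, dotProduct_comm]

theorem HasDerivAt.dotProduct {𝕜 n : Type*} [NontriviallyNormedField 𝕜] [Fintype n]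
    {u v : 𝕜 → n → 𝕜} {u' v' : n → 𝕜} {t : 𝕜}
    (hu : HasDerivAt u u' t) (hv : HasDerivAt v v' t) :
    HasDerivAt (fun s => u s ⬝ᵥ v s) (u' ⬝ᵥ v t + u t ⬝ᵥ v') t := by
  have := HasDerivAt.fun_sum fun i (_ : i ∈ Finset.univ) =>
    (hasDerivAt_pi.1 hu i).mul (hasDerivAt_pi.1 hv i)
  simp only [Finset.sum_add_distrib] at this
  exact this

-- Any submultiplicative matrix norm would do: it only serves to differentiate matrix curves.
attribute [local instance] Matrix.linftyOpNormedAddCommGroup Matrix.linftyOpNormedSpace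
  Matrix.linftyOpNormedRing Matrix.linftyOpNormedAlgebra

theorem HasDerivAt.mulVec_const {𝕜 m n : Type*} [NontriviallyNormedField 𝕜] [CompleteSpace 𝕜]
    [Fintype m] [Fintype n] {M : 𝕜 → Matrix m n 𝕜} {M' : Matrix m n 𝕜} {t : 𝕜}
    (hM : HasDerivAt M M' t) (v : n → 𝕜) :
    HasDerivAt (fun s => M s *ᵥ v) (M' *ᵥ v) t := by
  exact ((mulVecBilin 𝕜 𝕜).flip v).toContinuousLinearMap.hasFDerivAt.comp_hasDerivAt t hM

theorem HasDerivAt.sub_mulVec_dotProduct_self {𝕜 n : Type*} [NontriviallyNormedField 𝕜]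
    [CompleteSpace 𝕜] [Fintype n] {M : 𝕜 → Matrix n n 𝕜} {M' : Matrix n n 𝕜} {t : 𝕜}
    (hM : HasDerivAt M M' t) (e : n → 𝕜) :
    HasDerivAt (fun s => (e - M s *ᵥ e) ⬝ᵥ (e - M s *ᵥ e))
      (-2 * ((e - M t *ᵥ e) ⬝ᵥ M' *ᵥ e)) t := by
  have hr := (hasDerivAt_const t e).fun_sub (hM.mulVec_const e)
  refine (hr.dotProduct hr).congr_deriv ?_
  rw [zero_sub, neg_dotProduct, dotProduct_neg, dotProduct_comm]
  ring

theorem hasDerivAt_mul_exp_smul {𝕂 𝔸 : Type*} [RCLike 𝕂] [NormedRing 𝔸] [NormedAlgebra 𝕂 𝔸]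
    [CompleteSpace 𝔸] (E A : 𝔸) :
    HasDerivAt (fun s : 𝕂 => E * NormedSpace.exp (s • A)) (E * A) 0 := by
  simpa using (hasDerivAt_exp_smul_const A (0 : 𝕂)).const_mul E

theorem attitude_gradient_innovation
    (R Rt : Matrix (Fin 3) (Fin 3) ℝ)
    (hR : R ∈ Matrix.specialOrthogonalGroup (Fin 3) ℝ)
    (hRt : Rt ∈ Matrix.specialOrthogonalGroup (Fin 3) ℝ)
    (ξ : Fin 3 → ℝ) :
    let e2 : Fin 3 → ℝ := ![0, 1, 0]
    let e3 : Fin 3 → ℝ := ![0, 0, 1]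
    let y2 : Fin 3 → ℝ := Rᵀ.mulVec e2
    let y3 : Fin 3 → ℝ := Rᵀ.mulVec e3
    let E : Matrix (Fin 3) (Fin 3) ℝ := R * Rtᵀ
    let Ve : Matrix (Fin 3) (Fin 3) ℝ → ℝ := fun M =>
      (e2 - M.mulVec e2) ⬝ᵥ (e2 - M.mulVec e2) + (e3 - M.mulVec e3) ⬝ᵥ (e3 - M.mulVec e3)
    deriv (fun s : ℝ => Ve (E * NormedSpace.exp (s • hat ξ))) 0
      = ((-2 : ℝ) • (hat e2).mulVec (Rt.mulVec y2)
          + (-2 : ℝ) • (hat e3).mulVec (Rt.mulVec y3)) ⬝ᵥ ξ := by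
  intro e2 e3 y2 y3 E Ve
  have hE : Eᵀ * E = 1 := by
    have hE' := mul_mem hR.1 (Unitary.star_mem hRt.1)
    rw [star_eq_conjTranspose, conjTranspose_eq_transpose_of_trivial] at hE'
    exact (mem_orthogonalGroup_iff' _ _).1 hE'
  have hy (e : Fin 3 → ℝ) : Rt *ᵥ (Rᵀ *ᵥ e) = Eᵀ *ᵥ e := by
    simp only [E, mulVec_mulVec, transpose_mul, transpose_transpose]
  have hcurve := hasDerivAt_mul_exp_smul (𝕂 := ℝ) E (hat ξ)
  have hVe := (hcurve.sub_mulVec_dotProduct_self e2).fun_add (hcurve.sub_mulVec_dotProduct_self e3)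
  simp only [zero_smul, NormedSpace.exp_zero, mul_one] at hVe
  refine hVe.deriv.trans ?_
  rw [hy, hy, sub_mulVec_dotProduct_mul_hat_mulVec hE,
    sub_mulVec_dotProduct_mul_hat_mulVec hE, add_dotProduct, smul_dotProduct, smul_dotProduct,
    smul_eq_mul, smul_eq_mul]
end
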